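/- arXiv:2211.03774 — 5 statements merged into one kernel-verified Lean document; each statement's English description precedes it below -/
import Mathlib

section
/- Let B₃ be the braid group on three strands, presented with generators s, t and relation s·t·s = t·s·t, let 𝒯(a₁,…,aₙ) = s^{a₁}·t^{−a₂}·s^{a₃}·⋯ ∈ B₃, and let E = 𝒯(1,−1,1) = s·t·s. Then for every element B of B₃ there exist a unique integer n ≥ 1, a unique integer sequence (a₁,…,aₙ) satisfying aᵢ·aⱼ ≥ 0 for all i, j ∈ {1,…,n} and aᵢ ≠ 0 for all i > 1, and a unique integer k, such that B = 𝒯(a₁,…,aₙ)·Eᵏ. -/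
/-- The single braid relation `s·t·s = t·s·t` for the braid group on three strands,
written as a relator in the free group on two generators. -/
def braidRels : Set (FreeGroup (Fin 2)) :=
  { FreeGroup.of 0 * FreeGroup.of 1 * FreeGroup.of 0 *
    (FreeGroup.of 1 * FreeGroup.of 0 * FreeGroup.of 1)⁻¹ }

/-- The braid group on three strands, presented with generators `s`, `t`
and the single relation `s·t·s = t·s·t`. -/
abbrev B3 : Type := PresentedGroup braidRels

/-- The first generator `s` of `B₃`. -/
def s : B3 := PresentedGroup.of 0

/-- The second generator `t` of `B₃`. -/
def t : B3 := PresentedGroup.of 1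

/-- The half-twist `Δ = s·t·s` (the 3-braid `E = 𝒯(1,−1,1)`). -/
def Δ : B3 := s * t * s

/-- Auxiliary function building `𝒯(a₁,…,aₙ)`: when the flag is `true` the next
entry is a power of `s` (horizontal twists on the top two strands), when `false`
it is an inverse power of `t`. -/
def Tgo : Bool → List ℤ → B3
  | _, [] => 1
  | true, a :: l => s ^ a * Tgo false l
  | false, a :: l => t ^ (-a) * Tgo true l

/-- The 3-braid `𝒯(a₁,…,aₙ) = s^{a₁} · t^{−a₂} · s^{a₃} · t^{−a₄} · ⋯` in `B₃`. -/
def T (l : List ℤ) : B3 := Tgo true l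

/-- The special 3-braid `E = 𝒯(1,−1,1) = s·t·s`. -/
def E : B3 := T [1, -1, 1]



/-!
Existence: the braids admitting a standard form include `1` and are stable under left
multiplication by `s`, `E` and `E⁻¹`, which generate `B₃` as a monoid (`t = E s E⁻¹`,
`s⁻¹ = t s E⁻¹`, `t⁻¹ = s t E⁻¹`). Conjugation by `E` exchanges `s` and `t`, so
`E 𝒯(a) = 𝒯(0, -a) E`; the only genuine rewriting is `s t = t⁻¹ E`, which turns `s 𝒯(0, b, …)`
with `b < 0` into `𝒯(0, 1, -(b + 1), …) E`. Zero entries produced on the way are absorbed by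
`s^x t^0 s^y = s^(x + y)`.

Uniqueness: send `B₃` to `SL(2, ℤ)` by `s ↦ U = [[1, 1], [0, 1]]` and `t ↦ L⁻¹` with
`L = [[1, 0], [1, 1]]`, so that `𝒯(a) ↦ U^a₁ L^a₂ U^a₃ ⋯` and `E` goes to a quarter-turn `J`.
The image of a standard `𝒯(a)` is entrywise nonnegative, or becomes so after negating its
off-diagonal entries; in particular its diagonal is positive, which right multiplication by
`J`, `J²` or `J³` destroys. Hence two standard forms of one braid have the same image of `𝒯(a)`.
Nonnegative matrices of determinant one factor uniquely into `U`s and `L`s, which recovers `a`,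
and the exponent sum `B₃ → ℤ` sends `E` to `3`, which recovers `k`.
-/

theorem s_mul_t_mul_s : s * t * s = t * s * t := by
  have h := PresentedGroup.mk_eq_mk_of_mul_inv_mem (rels := braidRels) rfl
  simp only [map_mul] at h
  exact h

theorem E_eq : E = s * t * s := by
  simp [E, T, Tgo, mul_assoc]

theorem semiconjBy_E_s : SemiconjBy E s t := by
  rw [SemiconjBy, E_eq]
  conv_lhs => rw [s_mul_t_mul_s]
  group

theorem semiconjBy_E_t : SemiconjBy E t s := by
  rw [SemiconjBy, E_eq]
  conv_rhs => rw [s_mul_t_mul_s]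
  group

theorem semiconjBy_E_Tgo (b : Bool) (l : List ℤ) :
    SemiconjBy E (Tgo b l) (Tgo (!b) (l.map Neg.neg)) := by
  induction l generalizing b with
  | nil => exact SemiconjBy.one_right E
  | cons a r ih =>
    cases b
    · simpa [Tgo] using (semiconjBy_E_t.zpow_right (-a)).mul_right (ih true)
    · simpa [Tgo] using (semiconjBy_E_s.zpow_right a).mul_right (ih false)

theorem Tgo_false_eq_T_zero_cons (l : List ℤ) : Tgo false l = T (0 :: l) := by
  simp [T, Tgo]

theorem E_mul_T (l : List ℤ) : E * T l = T (0 :: l.map Neg.neg) * E := by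
  rw [← Tgo_false_eq_T_zero_cons]
  exact semiconjBy_E_Tgo true l

theorem E_inv_mul_T (l : List ℤ) : E⁻¹ * T l = T (0 :: l.map Neg.neg) * E⁻¹ := by
  have h := (semiconjBy_E_Tgo false (l.map Neg.neg)).inv_symm_left.eq
  simpa only [Bool.not_false, List.map_map, Function.comp_def, neg_neg, List.map_id',
    Tgo_false_eq_T_zero_cons, T] using h

theorem s_mul_T_cons (a : ℤ) (r : List ℤ) : s * T (a :: r) = T ((a + 1) :: r) := by
  simp only [T, Tgo]
  group

theorem s_mul_T_zero_cons (b : ℤ) (r : List ℤ) :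
    s * T (0 :: b :: r) = T (0 :: 1 :: -(b + 1) :: r.map Neg.neg) * E := by
  have hst : s * t = t⁻¹ * E := by
    rw [E_eq, s_mul_t_mul_s]
    group
  simp only [T, Tgo, zpow_zero, one_mul]
  calc s * (t ^ (-b) * Tgo true r) = s * t * t ^ (-(b + 1)) * Tgo true r := by group
    _ = t⁻¹ * (E * t ^ (-(b + 1))) * Tgo true r := by rw [hst]; group
    _ = t⁻¹ * s ^ (-(b + 1)) * (E * Tgo true r) := by
      rw [(semiconjBy_E_t.zpow_right _).eq]; group
    _ = _ := by rw [(semiconjBy_E_Tgo true r).eq, Bool.not_true]; group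

theorem Tgo_cons_congr (b : Bool) (a : ℤ) {r r' : List ℤ} (h : ∀ b, Tgo b r' = Tgo b r) :
    Tgo b (a :: r') = Tgo b (a :: r) := by
  cases b <;> simp only [Tgo, h]

theorem Tgo_cons_zero_cons (b : Bool) (x y : ℤ) (r : List ℤ) :
    Tgo b (x :: 0 :: y :: r) = Tgo b ((x + y) :: r) := by
  cases b <;> simp only [Tgo, neg_zero, zpow_zero, one_mul, ← mul_assoc, ← zpow_add, neg_add]

theorem Tgo_pair_zero (b : Bool) (x : ℤ) : Tgo b [x, 0] = Tgo b [x] := by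
  cases b <;> simp [Tgo]

theorem exists_reduced_Tgo_eq {p : ℤ → Prop} (h0 : p 0) (hadd : ∀ x y, p x → p y → p (x + y))
    {l : List ℤ} (hl : ∀ x ∈ l, p x) :
    ∃ l', l' ≠ [] ∧ (∀ x ∈ l', p x) ∧ (∀ x ∈ l'.tail, x ≠ 0) ∧ ∀ b, Tgo b l' = Tgo b l := by
  induction l with
  | nil => exact ⟨[0], by simp, by simpa using h0, by simp, fun b => by cases b <;> simp [Tgo]⟩
  | cons a r ih =>
    have ha : p a := hl a List.mem_cons_self
    obtain ⟨_ | ⟨c, r'⟩, hne, hp, htail, hT⟩ := ih fun x hx => hl x (List.mem_cons_of_mem a hx)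
    · exact absurd rfl hne
    have hTa (b : Bool) : Tgo b (a :: c :: r') = Tgo b (a :: r) := Tgo_cons_congr b a hT
    by_cases hc : c = 0
    · subst hc
      rcases r' with _ | ⟨d, r''⟩
      · exact ⟨[a], by simp, by simpa using ha, by simp, fun b => by rw [← hTa, Tgo_pair_zero]⟩
      · refine ⟨(a + d) :: r'', by simp, ?_, fun x hx => htail x (List.mem_cons_of_mem d hx),
          fun b => by rw [← hTa, Tgo_cons_zero_cons]⟩
        simp only [List.mem_cons, forall_eq_or_imp] at hp ⊢
        exact ⟨hadd a d ha hp.2.1, hp.2.2⟩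
    · refine ⟨a :: c :: r', by simp, ?_, ?_, hTa⟩
      · simpa [ha] using hp
      · simpa [hc] using htail

def SameSign (l : List ℤ) : Prop :=
  (∀ x ∈ l, 0 ≤ x) ∨ ∀ x ∈ l, x ≤ 0

theorem sameSign_iff_forall_mul_nonneg {l : List ℤ} : SameSign l ↔ ∀ a ∈ l, ∀ b ∈ l, 0 ≤ a * b := by
  constructor
  · rintro (h | h) a ha b hb
    · exact mul_nonneg (h a ha) (h b hb)
    · exact mul_nonneg_of_nonpos_of_nonpos (h a ha) (h b hb)
  · intro h
    by_contra hmixed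
    obtain ⟨⟨a, ha, ha0⟩, ⟨b, hb, hb0⟩⟩ : (∃ a ∈ l, a < 0) ∧ ∃ b ∈ l, 0 < b := by
      simpa [SameSign, not_or] using hmixed
    exact (mul_neg_of_neg_of_pos ha0 hb0).not_ge (h a ha b hb)

theorem sameSign_singleton (x : ℤ) : SameSign [x] := by
  rcases le_total 0 x with h | h <;> simp [SameSign, h]

theorem SameSign.zero_cons_map_neg {l : List ℤ} (h : SameSign l) :
    SameSign (0 :: l.map Neg.neg) := by
  simp only [SameSign, List.forall_mem_cons, List.forall_mem_map, neg_nonneg, neg_nonpos,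
    le_refl, true_and]
  exact h.symm

def IsStandard (l : List ℤ) : Prop :=
  l ≠ [] ∧ SameSign l ∧ ∀ a ∈ l.tail, a ≠ 0

theorem isStandard_singleton_zero : IsStandard [0] :=
  ⟨by simp, sameSign_singleton 0, by simp⟩

theorem IsStandard.map_neg {l : List ℤ} (hl : IsStandard l) : IsStandard (l.map Neg.neg) := by
  refine ⟨by simpa using hl.1, ?_, ?_⟩
  · simp only [SameSign, List.forall_mem_map, neg_nonneg, neg_nonpos]
    exact hl.2.1.symm
  · rw [← List.map_tail]
    simpa only [List.forall_mem_map, ne_eq, neg_eq_zero] using hl.2.2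

theorem IsStandard.exists_eq_cons {l : List ℤ} (hl : IsStandard l) (h : ∀ x ∈ l, 0 ≤ x) :
    ∃ a r, l = a :: r ∧ 0 ≤ a ∧ ∀ x ∈ r, 0 < x := by
  obtain ⟨a, r, rfl⟩ := List.exists_cons_of_ne_nil hl.1
  simp only [List.forall_mem_cons] at h
  exact ⟨a, r, rfl, h.1, fun x hx => lt_of_le_of_ne (h.2 x hx) (hl.2.2 x hx).symm⟩

def HasStandardForm (B : B3) : Prop :=
  ∃ l, ∃ k : ℤ, IsStandard l ∧ B = T l * E ^ k

theorem hasStandardForm_of_sameSign {l : List ℤ} (hl : SameSign l) (k : ℤ) :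
    HasStandardForm (T l * E ^ k) := by
  obtain ⟨l', hne, hsign, htail, hT⟩ :
      ∃ l', l' ≠ [] ∧ SameSign l' ∧ (∀ x ∈ l'.tail, x ≠ 0) ∧ ∀ b, Tgo b l' = Tgo b l := by
    rcases hl with hl | hl
    · obtain ⟨l', h⟩ := exists_reduced_Tgo_eq le_rfl (fun _ _ => add_nonneg) hl
      exact ⟨l', h.1, .inl h.2.1, h.2.2⟩
    · obtain ⟨l', h⟩ := exists_reduced_Tgo_eq (p := (· ≤ 0)) le_rfl (fun _ _ => add_nonpos) hl
      exact ⟨l', h.1, .inr h.2.1, h.2.2⟩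
  exact ⟨l', k, ⟨hne, hsign, htail⟩, by rw [T, T, hT]⟩

theorem HasStandardForm.E_mul {B : B3} (h : HasStandardForm B) : HasStandardForm (E * B) := by
  obtain ⟨l, k, hl, rfl⟩ := h
  rw [← mul_assoc, E_mul_T, mul_assoc, ← zpow_one_add]
  exact hasStandardForm_of_sameSign hl.2.1.zero_cons_map_neg _

theorem HasStandardForm.E_inv_mul {B : B3} (h : HasStandardForm B) :
    HasStandardForm (E⁻¹ * B) := by
  obtain ⟨l, k, hl, rfl⟩ := h
  rw [← mul_assoc, E_inv_mul_T, mul_assoc, ← zpow_neg_one, ← zpow_add]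
  exact hasStandardForm_of_sameSign hl.2.1.zero_cons_map_neg _

theorem HasStandardForm.s_mul {B : B3} (h : HasStandardForm B) : HasStandardForm (s * B) := by
  obtain ⟨l, k, ⟨hne, hsign, htail⟩, rfl⟩ := h
  obtain ⟨a, _ | ⟨b, r⟩, rfl⟩ := List.exists_cons_of_ne_nil hne
  · rw [← mul_assoc, s_mul_T_cons]
    exact hasStandardForm_of_sameSign (sameSign_singleton _) k
  have hb : b ≠ 0 := htail b List.mem_cons_self
  simp only [SameSign, List.forall_mem_cons] at hsign
  by_cases hab : a = 0 ∧ b < 0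
  · obtain ⟨rfl, hb⟩ := hab
    have hr : ∀ x ∈ r, x ≤ 0 := by
      rcases hsign with h | h
      · exact absurd h.2.1 (not_le.2 hb)
      · exact h.2.2
    rw [← mul_assoc, s_mul_T_zero_cons, mul_assoc, ← zpow_one_add]
    refine hasStandardForm_of_sameSign (.inl ?_) _
    simp only [List.forall_mem_cons, List.forall_mem_map, neg_nonneg]
    exact ⟨le_rfl, zero_le_one, by omega, hr⟩
  · rw [← mul_assoc, s_mul_T_cons]
    refine hasStandardForm_of_sameSign ?_ k
    simp only [SameSign, List.forall_mem_cons]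
    rcases hsign with h | h
    · exact .inl ⟨by omega, h.2⟩
    · exact .inr ⟨by omega, h.2⟩

theorem hasStandardForm (B : B3) : HasStandardForm B := by
  have ht {B : B3} (h : HasStandardForm B) : HasStandardForm (t * B) := by
    rw [show t * B = E * (s * (E⁻¹ * B)) by rw [← mul_assoc, semiconjBy_E_s.eq]; group]
    exact h.E_inv_mul.s_mul.E_mul
  have hB : B ∈ Subgroup.closure (Set.range PresentedGroup.of) := by
    rw [PresentedGroup.closure_range_of]
    trivial
  induction hB using Subgroup.closure_induction_left with
  | one => exact ⟨[0], 0, isStandard_singleton_zero, by simp [T, Tgo]⟩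
  | mul_left x hx B _ h =>
    obtain ⟨i, rfl⟩ := hx
    fin_cases i
    exacts [h.s_mul, ht h]
  | inv_mul_cancel x hx B _ h =>
    obtain ⟨i, rfl⟩ := hx
    fin_cases i
    · show HasStandardForm (s⁻¹ * B)
      rw [show s⁻¹ * B = t * (s * (E⁻¹ * B)) by rw [E_eq]; group]
      exact ht h.E_inv_mul.s_mul
    · show HasStandardForm (t⁻¹ * B)
      rw [show t⁻¹ * B = s * (t * (E⁻¹ * B)) by rw [E_eq, s_mul_t_mul_s]; group]
      exact (ht h.E_inv_mul).s_mul

open MatrixGroups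

def unipotent : Bool → SL(2, ℤ)
  | true => ModularGroup.T
  | false => ⟨!![1, 0; 1, 1], by simp [Matrix.det_fin_two_of]⟩

def toSL2 : B3 →* SL(2, ℤ) :=
  PresentedGroup.toGroup (f := ![unipotent true, (unipotent false)⁻¹]) (by
    rintro _ rfl
    simp only [map_mul, map_inv, FreeGroup.lift_apply_of]
    decide)

theorem toSL2_Tgo_nil (b : Bool) : toSL2 (Tgo b []) = 1 := by
  cases b <;> exact map_one _

theorem toSL2_Tgo_cons (b : Bool) (a : ℤ) (r : List ℤ) :
    toSL2 (Tgo b (a :: r)) = unipotent b ^ a * toSL2 (Tgo (!b) r) := by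
  cases b <;> simp [Tgo, toSL2, s, t, _root_.inv_zpow']

theorem toSL2_E : toSL2 E = ModularGroup.S⁻¹ := by
  simp only [E, T, Tgo, toSL2, s, t]
  decide

def nonnegSL2 : Submonoid SL(2, ℤ) where
  carrier := {M | ∀ i j, 0 ≤ M i j}
  mul_mem' {M N} hM hN i j := by
    rw [Matrix.SpecialLinearGroup.coe_mul, Matrix.mul_apply]
    exact Finset.sum_nonneg fun k _ => mul_nonneg (hM i k) (hN k j)
  one_mem' i j := by
    rw [Matrix.SpecialLinearGroup.coe_one, Matrix.one_apply]
    split_ifs <;> norm_num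

theorem unipotent_mem_nonnegSL2 (b : Bool) : unipotent b ∈ nonnegSL2 := by
  cases b <;> intro i j <;> fin_cases i <;> fin_cases j <;> simp [unipotent]

theorem coe_unipotent_mul (b : Bool) (M : SL(2, ℤ)) :
    (↑(unipotent b * M) : Matrix (Fin 2) (Fin 2) ℤ) =
      if b then !![M 0 0 + M 1 0, M 0 1 + M 1 1; M 1 0, M 1 1]
      else !![M 0 0, M 0 1; M 0 0 + M 1 0, M 0 1 + M 1 1] := by
  rw [Matrix.SpecialLinearGroup.coe_mul, Matrix.eta_fin_two (M : Matrix (Fin 2) (Fin 2) ℤ)]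
  cases b <;> simp [unipotent]

theorem unipotent_mul_ne_one (b : Bool) {M : SL(2, ℤ)} (hM : M ∈ nonnegSL2) :
    unipotent b * M ≠ 1 := by
  intro h
  rw [eq_inv_of_mul_eq_one_right h] at hM
  cases b
  · exact absurd (hM 1 0) (by decide)
  · exact absurd (hM 0 1) (by decide)

/-- `U M` has its first row above its second and `L N` the other way round, so a common value
would have two equal rows, contradicting `det = 1`. -/
theorem unipotent_mul_ne_unipotent_not_mul (b : Bool) {M N : SL(2, ℤ)} (hM : M ∈ nonnegSL2)
    (hN : N ∈ nonnegSL2) : unipotent b * M ≠ unipotent (!b) * N := by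
  wlog hb : b = true generalizing b M N
  · simpa [Bool.eq_false_iff.2 hb] using (this true hN hM rfl).symm
  subst hb
  intro h
  have h' := congrArg (fun X : SL(2, ℤ) => (X : Matrix (Fin 2) (Fin 2) ℤ)) h
  simp only [coe_unipotent_mul, Bool.not_true, Bool.false_eq_true, ↓reduceIte,
    EmbeddingLike.apply_eq_iff_eq, Matrix.vecCons_inj, and_true] at h'
  have hdet := M.prop
  rw [Matrix.det_fin_two] at hdet
  have := hM 0 0; have := hM 0 1; have := hN 1 0; have := hN 1 1
  have h00 : M 0 0 = 0 := by omega
  have h01 : M 0 1 = 0 := by omega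
  simp [h00, h01] at hdet

theorem unipotent_zpow_mul_inj {b : Bool} {a c : ℤ} (ha : 0 ≤ a) (hc : 0 ≤ c)
    {M N : SL(2, ℤ)} (hM : M = 1 ∨ ∃ M' ∈ nonnegSL2, M = unipotent (!b) * M')
    (hN : N = 1 ∨ ∃ N' ∈ nonnegSL2, N = unipotent (!b) * N')
    (h : unipotent b ^ a * M = unipotent b ^ c * N) : a = c ∧ M = N := by
  wlog hac : a ≤ c generalizing a c M N
  · obtain ⟨h₁, h₂⟩ := this hc ha hN hM h.symm (le_of_not_ge hac)
    exact ⟨h₁.symm, h₂.symm⟩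
  obtain ⟨n, rfl⟩ : ∃ n : ℕ, c = a + n := ⟨(c - a).toNat, by omega⟩
  rw [zpow_add, mul_assoc, zpow_natCast] at h
  have hMN := mul_left_cancel h
  rcases n with _ | n
  · simpa using hMN
  have hN' : unipotent b ^ n * N ∈ nonnegSL2 := by
    refine mul_mem (pow_mem (unipotent_mem_nonnegSL2 b) n) ?_
    rcases hN with rfl | ⟨N', hN', rfl⟩
    exacts [one_mem _, mul_mem (unipotent_mem_nonnegSL2 _) hN']
  rw [pow_succ', mul_assoc] at hMN
  exfalso
  rcases hM with rfl | ⟨M', hM', rfl⟩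
  · exact unipotent_mul_ne_one b hN' hMN.symm
  · exact unipotent_mul_ne_unipotent_not_mul b hN' hM' hMN.symm

theorem toSL2_Tgo_mem_nonnegSL2 (b : Bool) {l : List ℤ} (hl : ∀ x ∈ l, 0 ≤ x) :
    toSL2 (Tgo b l) ∈ nonnegSL2 := by
  induction l generalizing b with
  | nil => exact toSL2_Tgo_nil b ▸ one_mem _
  | cons a r ih =>
    simp only [List.forall_mem_cons] at hl
    rw [toSL2_Tgo_cons]
    lift a to ℕ using hl.1
    rw [zpow_natCast]
    exact mul_mem (pow_mem (unipotent_mem_nonnegSL2 b) a) (ih _ hl.2)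

theorem exists_toSL2_Tgo_cons_eq_unipotent_mul (b : Bool) {a : ℤ} (ha : 0 < a) {r : List ℤ}
    (hr : ∀ x ∈ r, 0 ≤ x) : ∃ M ∈ nonnegSL2, toSL2 (Tgo b (a :: r)) = unipotent b * M := by
  refine ⟨unipotent b ^ (a - 1) * toSL2 (Tgo (!b) r), ?_, ?_⟩
  · refine toSL2_Tgo_cons b (a - 1) r ▸ toSL2_Tgo_mem_nonnegSL2 b ?_
    simpa only [List.forall_mem_cons] using ⟨by omega, hr⟩
  · rw [toSL2_Tgo_cons, ← mul_assoc, ← zpow_one_add, add_sub_cancel]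

theorem toSL2_Tgo_eq_one_or (b : Bool) {r : List ℤ} (hr : ∀ x ∈ r, 0 < x) :
    toSL2 (Tgo b r) = 1 ∨ ∃ M ∈ nonnegSL2, toSL2 (Tgo b r) = unipotent b * M := by
  rcases r with _ | ⟨a, r⟩
  · exact .inl (toSL2_Tgo_nil b)
  simp only [List.forall_mem_cons] at hr
  exact .inr (exists_toSL2_Tgo_cons_eq_unipotent_mul b hr.1 fun x hx => (hr.2 x hx).le)

theorem toSL2_Tgo_cons_ne_one (b : Bool) {a : ℤ} {r : List ℤ} (hr : ∀ x ∈ a :: r, 0 < x) :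
    toSL2 (Tgo b (a :: r)) ≠ 1 := by
  simp only [List.forall_mem_cons] at hr
  obtain ⟨M, hM, hM'⟩ :=
    exists_toSL2_Tgo_cons_eq_unipotent_mul b hr.1 fun x hx => (hr.2 x hx).le
  exact hM' ▸ unipotent_mul_ne_one b hM

theorem eq_of_toSL2_Tgo_eq {r₁ r₂ : List ℤ} (b : Bool) (hr₁ : ∀ x ∈ r₁, 0 < x)
    (hr₂ : ∀ x ∈ r₂, 0 < x) (h : toSL2 (Tgo b r₁) = toSL2 (Tgo b r₂)) : r₁ = r₂ := by
  induction r₁ generalizing r₂ b with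
  | nil =>
    rcases r₂ with _ | ⟨c, r₂⟩
    · rfl
    · exact absurd (h.symm.trans (toSL2_Tgo_nil b)) (toSL2_Tgo_cons_ne_one b hr₂)
  | cons a r₁ ih =>
    rcases r₂ with _ | ⟨c, r₂⟩
    · exact absurd (h.trans (toSL2_Tgo_nil b)) (toSL2_Tgo_cons_ne_one b hr₁)
    simp only [List.forall_mem_cons] at hr₁ hr₂
    rw [toSL2_Tgo_cons, toSL2_Tgo_cons] at h
    obtain ⟨rfl, htail⟩ := unipotent_zpow_mul_inj hr₁.1.le hr₂.1.le
      (toSL2_Tgo_eq_one_or _ hr₁.2) (toSL2_Tgo_eq_one_or _ hr₂.2) h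
    rw [ih (!b) hr₁.2 hr₂.2 htail]

theorem eq_of_toSL2_T_eq_of_nonneg {l₁ l₂ : List ℤ} (h₁ : IsStandard l₁) (h₂ : IsStandard l₂)
    (hn₁ : ∀ x ∈ l₁, 0 ≤ x) (hn₂ : ∀ x ∈ l₂, 0 ≤ x) (h : toSL2 (T l₁) = toSL2 (T l₂)) :
    l₁ = l₂ := by
  obtain ⟨a, r₁, rfl, ha, hr₁⟩ := h₁.exists_eq_cons hn₁
  obtain ⟨c, r₂, rfl, hc, hr₂⟩ := h₂.exists_eq_cons hn₂
  rw [T, T, toSL2_Tgo_cons, toSL2_Tgo_cons] at h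
  obtain ⟨rfl, htail⟩ := unipotent_zpow_mul_inj ha hc
    (toSL2_Tgo_eq_one_or _ hr₁) (toSL2_Tgo_eq_one_or _ hr₂) h
  rw [eq_of_toSL2_Tgo_eq _ hr₁ hr₂ htail]

/-- Conjugation by `diag(1, -1)`. -/
def negOffDiag : SL(2, ℤ) →* SL(2, ℤ) where
  toFun M := ⟨!![M 0 0, -M 0 1; -M 1 0, M 1 1], by
    rw [Matrix.det_fin_two_of, neg_mul_neg, ← Matrix.det_fin_two, M.prop]⟩
  map_one' := by
    ext i j
    fin_cases i <;> fin_cases j <;> simp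
  map_mul' M N := by
    apply Subtype.ext
    change _ = (_ : Matrix (Fin 2) (Fin 2) ℤ) * _
    dsimp only
    simp only [Matrix.SpecialLinearGroup.coe_mul, Matrix.mul_fin_two, Matrix.mul_apply,
      Fin.sum_univ_two, EmbeddingLike.apply_eq_iff_eq, Matrix.vecCons_inj, and_true]
    refine ⟨⟨?_, ?_⟩, ?_, ?_⟩ <;> ring

theorem coe_negOffDiag (M : SL(2, ℤ)) :
    (negOffDiag M : Matrix (Fin 2) (Fin 2) ℤ) = !![M 0 0, -M 0 1; -M 1 0, M 1 1] :=
  rfl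

theorem negOffDiag_unipotent (b : Bool) : negOffDiag (unipotent b) = (unipotent b)⁻¹ := by
  cases b <;> decide

theorem toSL2_Tgo_map_neg (b : Bool) (l : List ℤ) :
    toSL2 (Tgo b (l.map Neg.neg)) = negOffDiag (toSL2 (Tgo b l)) := by
  induction l generalizing b with
  | nil => simp [toSL2_Tgo_nil]
  | cons a r ih =>
    rw [List.map_cons, toSL2_Tgo_cons, toSL2_Tgo_cons, ih, map_mul, map_zpow,
      negOffDiag_unipotent, _root_.inv_zpow']

theorem eq_one_of_mem_nonnegSL2_of_negOffDiag_mem {M : SL(2, ℤ)} (hM : M ∈ nonnegSL2)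
    (hM' : negOffDiag M ∈ nonnegSL2) : M = 1 := by
  have h01 := hM' 0 1
  have h10 := hM' 1 0
  simp only [coe_negOffDiag, Matrix.of_apply, Matrix.cons_val', Matrix.cons_val_zero,
    Matrix.cons_val_one, Matrix.empty_val', Matrix.cons_val_fin_one, neg_nonneg] at h01 h10
  have h01 : M 0 1 = 0 := le_antisymm h01 (hM 0 1)
  have h10 : M 1 0 = 0 := le_antisymm h10 (hM 1 0)
  have hdet := M.prop
  rw [Matrix.det_fin_two, h01, h10, mul_zero, sub_zero] at hdet
  have h00 : M 0 0 = 1 := Int.eq_one_of_mul_eq_one_right (hM 0 0) hdet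
  have h11 : M 1 1 = 1 := by rwa [h00, one_mul] at hdet
  ext i j
  fin_cases i <;> fin_cases j <;> simp [h00, h01, h10, h11]

theorem eq_singleton_zero_of_toSL2_T_eq_one {l : List ℤ} (hl : IsStandard l)
    (hn : ∀ x ∈ l, 0 ≤ x) (h : toSL2 (T l) = 1) : l = [0] :=
  eq_of_toSL2_T_eq_of_nonneg hl isStandard_singleton_zero hn (by simp)
    (h.trans (by simp [T, Tgo]))

theorem eq_of_toSL2_T_eq_of_nonneg_of_nonpos {l₁ l₂ : List ℤ} (h₁ : IsStandard l₁)
    (h₂ : IsStandard l₂) (hn₁ : ∀ x ∈ l₁, 0 ≤ x) (hn₂ : ∀ x ∈ l₂, x ≤ 0)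
    (h : toSL2 (T l₁) = toSL2 (T l₂)) : l₁ = l₂ := by
  have hn₂' : ∀ x ∈ l₂.map Neg.neg, 0 ≤ x := by
    simpa only [List.forall_mem_map, neg_nonneg] using hn₂
  have hM₂ := toSL2_Tgo_mem_nonnegSL2 true hn₂'
  rw [toSL2_Tgo_map_neg] at hM₂
  have hone : toSL2 (T l₁) = 1 :=
    eq_one_of_mem_nonnegSL2_of_negOffDiag_mem (toSL2_Tgo_mem_nonnegSL2 true hn₁) (h ▸ hM₂)
  have hneg : l₂.map Neg.neg = [0].map Neg.neg := by
    rw [eq_singleton_zero_of_toSL2_T_eq_one h₂.map_neg hn₂'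
      (by rw [T, toSL2_Tgo_map_neg, ← T, ← h, hone, map_one])]
    simp
  rw [eq_singleton_zero_of_toSL2_T_eq_one h₁ hn₁ hone,
    List.map_injective_iff.2 neg_injective hneg]

theorem eq_of_toSL2_T_eq {l₁ l₂ : List ℤ} (h₁ : IsStandard l₁) (h₂ : IsStandard l₂)
    (h : toSL2 (T l₁) = toSL2 (T l₂)) : l₁ = l₂ := by
  rcases h₁.2.1 with hn₁ | hn₁ <;> rcases h₂.2.1 with hn₂ | hn₂
  · exact eq_of_toSL2_T_eq_of_nonneg h₁ h₂ hn₁ hn₂ h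
  · exact eq_of_toSL2_T_eq_of_nonneg_of_nonpos h₁ h₂ hn₁ hn₂ h
  · exact (eq_of_toSL2_T_eq_of_nonneg_of_nonpos h₂ h₁ hn₂ hn₁ h.symm).symm
  · refine List.map_injective_iff.2 neg_injective
      (eq_of_toSL2_T_eq_of_nonneg h₁.map_neg h₂.map_neg
        (by simpa only [List.forall_mem_map, neg_nonneg] using hn₁)
        (by simpa only [List.forall_mem_map, neg_nonneg] using hn₂) ?_)
    rw [T, T, toSL2_Tgo_map_neg, toSL2_Tgo_map_neg]
    exact congrArg negOffDiag h

def posDiag : Set SL(2, ℤ) :=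
  {M | 0 < M 0 0 ∧ 0 < M 1 1}

theorem mem_posDiag_of_nonneg {M : SL(2, ℤ)} (h00 : 0 ≤ M 0 0) (h11 : 0 ≤ M 1 1)
    (hoff : 0 ≤ M 0 1 * M 1 0) : M ∈ posDiag := by
  have hdet := M.prop
  rw [Matrix.det_fin_two] at hdet
  have hpos : 0 < M 0 0 * M 1 1 := by linarith
  exact ⟨pos_of_mul_pos_left hpos h11, pos_of_mul_pos_right hpos h00⟩

theorem toSL2_T_mem_posDiag {l : List ℤ} (hl : IsStandard l) : toSL2 (T l) ∈ posDiag := by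
  rcases hl.2.1 with h | h
  · have hM := toSL2_Tgo_mem_nonnegSL2 true h
    exact mem_posDiag_of_nonneg (hM 0 0) (hM 1 1) (mul_nonneg (hM 0 1) (hM 1 0))
  · have hM := toSL2_Tgo_mem_nonnegSL2 true (l := l.map Neg.neg)
      (by simpa only [List.forall_mem_map, neg_nonneg] using h)
    rw [toSL2_Tgo_map_neg] at hM
    have h00 := hM 0 0
    have h01 := hM 0 1
    have h10 := hM 1 0
    have h11 := hM 1 1
    simp only [coe_negOffDiag, Matrix.of_apply, Matrix.cons_val', Matrix.cons_val_zero,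
      Matrix.cons_val_one, Matrix.empty_val', Matrix.cons_val_fin_one, neg_nonneg]
      at h00 h01 h10 h11
    exact mem_posDiag_of_nonneg h00 h11 (mul_nonneg_of_nonpos_of_nonpos h01 h10)

theorem toSL2_E_zpow_eq_one {M : SL(2, ℤ)} {m : ℤ} (hM : M ∈ posDiag)
    (hMJ : M * toSL2 E ^ m ∈ posDiag) : toSL2 E ^ m = 1 := by
  have h4 : toSL2 E ^ (4 : ℤ) = 1 := by
    rw [toSL2_E]
    decide
  have hJ1 : (↑(toSL2 E ^ (1 : ℤ)) : Matrix (Fin 2) (Fin 2) ℤ) = !![0, 1; -1, 0] := by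
    rw [toSL2_E]
    decide
  have hJ2 : (↑(toSL2 E ^ (2 : ℤ)) : Matrix (Fin 2) (Fin 2) ℤ) = !![-1, 0; 0, -1] := by
    rw [toSL2_E]
    decide
  have hJ3 : (↑(toSL2 E ^ (3 : ℤ)) : Matrix (Fin 2) (Fin 2) ℤ) = !![0, -1; 1, 0] := by
    rw [toSL2_E]
    decide
  rw [← Int.emod_add_mul_ediv m 4, zpow_add, zpow_mul, h4, one_zpow, mul_one] at hMJ ⊢
  have hdet := M.prop
  rw [Matrix.det_fin_two] at hdet
  obtain ⟨h00, h11⟩ := hM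
  have hm : m % 4 = 0 ∨ m % 4 = 1 ∨ m % 4 = 2 ∨ m % 4 = 3 := by omega
  rcases hm with hm | hm | hm | hm <;> rw [hm] at hMJ ⊢
  · rfl
  all_goals
    simp only [posDiag, Set.mem_ofPred_eq, Matrix.SpecialLinearGroup.coe_mul, hJ1, hJ2, hJ3,
      Matrix.mul_apply, Fin.sum_univ_two, Matrix.of_apply, Matrix.cons_val', Matrix.cons_val_zero,
      Matrix.cons_val_one, Matrix.cons_val_fin_one] at hMJ
    nlinarith [hMJ.1, hMJ.2]

def exponentSum : B3 →* Multiplicative ℤ :=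
  PresentedGroup.toGroup (f := fun _ => Multiplicative.ofAdd 1) (by rintro _ rfl; simp)

theorem E_zpow_injective : Function.Injective (E ^ · : ℤ → B3) := by
  intro m n h
  have hE : exponentSum E = Multiplicative.ofAdd 3 := by
    simp only [E_eq, exponentSum, s, t, map_mul, PresentedGroup.toGroup.of]
    rfl
  have := congrArg (fun x => Multiplicative.toAdd (exponentSum x)) h
  simp only [map_zpow, hE, toAdd_zpow, toAdd_ofAdd, smul_eq_mul] at this
  omega

theorem eq_of_T_mul_E_zpow_eq {l₁ l₂ : List ℤ} {k₁ k₂ : ℤ} (h₁ : IsStandard l₁)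
    (h₂ : IsStandard l₂) (h : T l₁ * E ^ k₁ = T l₂ * E ^ k₂) : l₁ = l₂ ∧ k₁ = k₂ := by
  have hρ : toSL2 (T l₂) = toSL2 (T l₁) * toSL2 E ^ (k₁ - k₂) := by
    rw [zpow_sub, ← mul_assoc, ← map_zpow, ← map_mul, h, map_mul, map_zpow, mul_inv_cancel_right]
  have hE := toSL2_E_zpow_eq_one (toSL2_T_mem_posDiag h₁) (hρ ▸ toSL2_T_mem_posDiag h₂)
  obtain rfl : l₁ = l₂ := eq_of_toSL2_T_eq h₁ h₂ (by rw [hρ, hE, mul_one])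
  exact ⟨rfl, E_zpow_injective (mul_left_cancel h)⟩

/-- Lemma 3.1 (Cabrera-Ibarra): every 3-braid `B` has a unique standard form
`B = 𝒯(a₁,…,aₙ)·Eᵏ` where `n ≥ 1` (the sequence is nonempty), all entries have the
same sign (`aᵢ·aⱼ ≥ 0` for all `i, j`), and `aᵢ ≠ 0` for all `i > 1`. -/
theorem standard_form_exists_unique (B : B3) :
    ∃! p : List ℤ × ℤ,
      p.1 ≠ [] ∧
      (∀ a ∈ p.1, ∀ b ∈ p.1, 0 ≤ a * b) ∧
      (∀ a ∈ p.1.tail, a ≠ 0) ∧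
      B = T p.1 * E ^ p.2 := by
  obtain ⟨l, k, hl, rfl⟩ := hasStandardForm B
  refine ⟨(l, k), ⟨hl.1, sameSign_iff_forall_mul_nonneg.1 hl.2.1, hl.2.2, rfl⟩, ?_⟩
  rintro ⟨l', k'⟩ ⟨hne, hsign, htail, h⟩
  obtain ⟨rfl, rfl⟩ :=
    eq_of_T_mul_E_zpow_eq ⟨hne, sameSign_iff_forall_mul_nonneg.2 hsign, htail⟩ hl h.symm
  rfl
end

section
/- Let B₃ be the braid group on three strands, presented with generators s, t and relation s·t·s = t·s·t, let 𝒯(a₁,…,aₙ) = s^{a₁}·t^{−a₂}·s^{a₃}·⋯ ∈ B₃, and let E = 𝒯(1,−1,1) = s·t·s. Then for all integers b and m, the identity 𝒯(−2)·𝒯(b)·E^{2m+1}·𝒯(2) = 𝒯(b−2,−2)·E^{2m+1} holds in B₃. -/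
/-
The half twist `E = Δ = s·t·s` conjugates `s` into `t` and `t` into `s`, so `Δ²` is central and
every odd power of `Δ` still swaps `s` and `t`. Hence `E^{2m+1}·s² = t²·E^{2m+1}`, and the
identity reduces to `s^{−2}·s^b = s^{b−2}`.
-/

theorem Δ_eq_t_mul_s_mul_t : Δ = t * s * t :=
  PresentedGroup.mk_eq_mk_of_mul_inv_mem rfl

theorem E_eq_Δ : E = Δ := by
  simp only [E, T, Tgo, Δ, zpow_one, neg_neg, mul_one, mul_assoc]

theorem semiconjBy_Δ_s_t : SemiconjBy Δ s t := by
  show Δ * s = t * Δ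
  conv_lhs => rw [Δ_eq_t_mul_s_mul_t]
  rw [Δ]
  group

theorem semiconjBy_Δ_t_s : SemiconjBy Δ t s := by
  show Δ * t = s * Δ
  conv_rhs => rw [Δ_eq_t_mul_s_mul_t]
  rw [Δ]
  group

theorem commute_Δ_sq_t : Commute (Δ ^ 2) t := by
  rw [sq]
  exact semiconjBy_Δ_s_t.mul_left semiconjBy_Δ_t_s

theorem semiconjBy_Δ_zpow_odd (m n : ℤ) : SemiconjBy (Δ ^ (2 * m + 1)) (s ^ n) (t ^ n) := by
  rw [zpow_add_one, zpow_mul, zpow_two, ← sq]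
  exact ((commute_Δ_sq_t.zpow_left m).semiconjBy.mul_left semiconjBy_Δ_s_t).zpow_right n

/-- Case 1, Subcase 1 of the proof of Theorem 3.8: for all integers `b` and `m`,
`𝒯(−2)·𝒯(b)·E^{2m+1}·𝒯(2) = 𝒯(b−2,−2)·E^{2m+1}` in `B₃`. -/
theorem gamma2_case1_subcase1 (b m : ℤ) :
    T [-2] * T [b] * E ^ (2 * m + 1) * T [2] = T [b - 2, -2] * E ^ (2 * m + 1) := by
  simp only [T, Tgo, mul_one, neg_neg, E_eq_Δ]
  rw [mul_assoc _ (Δ ^ (2 * m + 1)), (semiconjBy_Δ_zpow_odd m 2).eq]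
  group
end

section
/- Let B₃ be the braid group on three strands, presented with generators s, t and relation s·t·s = t·s·t, let 𝒯(a₁,…,aₙ) = s^{a₁}·t^{−a₂}·s^{a₃}·⋯ ∈ B₃, and let E = 𝒯(1,−1,1) = s·t·s. Then for all integers a₂ and m, the identity 𝒯(−2)·𝒯(0,a₂)·E^{2m+1}·𝒯(2) = 𝒯(−2,a₂−2)·E^{2m+1} holds in B₃. -/
/-!
Conjugation by the half-twist `E = Δ = s·t·s` swaps `s` and `t`, so `Δ²` is central and every odd
power of `Δ` also swaps them. Hence `Δ^{2m+1}·s² = t²·Δ^{2m+1}`, and the `s²` on the right of the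
left-hand side is absorbed into the `t`-block: `t^{−a₂}·t² = t^{−(a₂−2)}`.
-/

theorem SemiconjBy.zpow_odd_of_swap {G : Type*} [Group G] {d x y : G}
    (hxy : SemiconjBy d x y) (hyx : SemiconjBy d y x) (m : ℤ) :
    SemiconjBy (d ^ (2 * m + 1)) x y := by
  have hsq : Commute (d ^ (2 : ℤ)) y := by
    rw [zpow_two]
    exact hxy.mul_left hyx
  rw [zpow_add_one, zpow_mul]
  exact SemiconjBy.mul_left (hsq.zpow_left m) hxy

/-- Case 2, Subcase 1 of the proof of Theorem 3.8: for all integers `a₂` and `m`,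
`𝒯(−2)·𝒯(0,a₂)·E^{2m+1}·𝒯(2) = 𝒯(−2,a₂−2)·E^{2m+1}` in `B₃`. -/
theorem gamma2_case2_subcase1 (a₂ m : ℤ) :
    T [-2] * T [0, a₂] * E ^ (2 * m + 1) * T [2] =
      T [-2, a₂ - 2] * E ^ (2 * m + 1) := by
  have hswap : Δ ^ (2 * m + 1) * s ^ (2 : ℤ) = t ^ (2 : ℤ) * Δ ^ (2 * m + 1) :=
    ((semiconjBy_Δ_s_t.zpow_odd_of_swap semiconjBy_Δ_t_s m).zpow_right 2).eq
  simp only [T, Tgo, E_eq_Δ, zpow_zero, one_mul, mul_one]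
  rw [mul_assoc _ (Δ ^ _), hswap]
  group
end

section
/- Let B₃ be the braid group on three strands, presented with generators s, t and relation s·t·s = t·s·t, let 𝒯(a₁,…,aₙ) = s^{a₁}·t^{−a₂}·s^{a₃}·⋯ ∈ B₃, and let E = 𝒯(1,−1,1) = s·t·s. Then for every integer m, every even n ≥ 2, and every integer sequence (a₁,…,aₙ), the identity 𝒯(−2)·𝒯(a₁,a₂,…,aₙ)·E^{2m}·𝒯(2) = 𝒯(a₁−2,a₂,…,aₙ,2)·E^{2m} holds in B₃. -/
theorem Δ_mul_s : Δ * s = t * Δ := by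
  rw [Δ]
  conv_lhs => rw [s_mul_t_mul_s]
  group

theorem Δ_mul_t : Δ * t = s * Δ := by
  rw [Δ]
  conv_rhs => rw [s_mul_t_mul_s]
  group

theorem commute_s_Δ_sq : Commute s (Δ ^ 2) := by
  calc s * Δ ^ 2 = s * Δ * Δ := by rw [sq, mul_assoc]
    _ = Δ * (t * Δ) := by rw [← Δ_mul_t, mul_assoc]
    _ = Δ ^ 2 * s := by rw [← Δ_mul_s, sq, mul_assoc]

theorem commute_s_zpow_E_zpow_two_mul (k m : ℤ) : Commute (s ^ k) (E ^ (2 * m)) := by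
  rw [E_eq_Δ, zpow_mul, zpow_two]
  exact (commute_s_Δ_sq.zpow_right m).zpow_left k

theorem Tgo_append_singleton_of_even (b : Bool) (c : ℤ) {l : List ℤ} (hl : Even l.length) :
    Tgo b (l ++ [c]) = Tgo b l * Tgo b [c] := by
  induction l using List.twoStepInduction generalizing b with
  | nil => simp [Tgo]
  | singleton a => simp at hl
  | cons_cons a a' l ih _ =>
    have hl' : Even l.length := by simpa [Nat.even_add_one] using hl
    cases b <;> simp [Tgo, ih _ hl', mul_assoc]

theorem T_append_singleton_of_even (c : ℤ) {l : List ℤ} (hl : Even l.length) :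
    T (l ++ [c]) = T l * s ^ c := by
  simp [T, Tgo_append_singleton_of_even _ _ hl, Tgo]

/-- The even-power-of-`E` computation in the proof of Theorem 3.8: for every integer `m`
and every integer sequence `(a₁,…,aₙ)` of even length `n ≥ 2`,
`𝒯(−2)·𝒯(a₁,a₂,…,aₙ)·E^{2m}·𝒯(2) = 𝒯(a₁−2,a₂,…,aₙ,2)·E^{2m}` in `B₃`. -/
theorem gamma2_even_power (m a₁ : ℤ) (rest : List ℤ)
    (heven : Even (a₁ :: rest).length) :
    T [-2] * T (a₁ :: rest) * E ^ (2 * m) * T [2] =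
      T ((a₁ - 2) :: (rest ++ [2])) * E ^ (2 * m) := by
  have hshift : T ((a₁ - 2) :: rest) = T [-2] * T (a₁ :: rest) := by
    simp only [T, Tgo, mul_one]
    group
  rw [← List.cons_append, T_append_singleton_of_even _ (by simpa using heven), hshift]
  simp only [T, Tgo, mul_one, mul_assoc, (commute_s_zpow_E_zpow_two_mul 2 m).eq]
end

section
/- Let n ≥ 2 and let a₁, …, aₙ be integers which are either all ≥ 1 or all ≤ −1. Define rational numbers v₁ = a₁ and v_k = a_k + 1/v_{k−1} for 2 ≤ k ≤ n. Then every v_k is well defined and nonzero (indeed |v_k| ≥ 1 for all k), and when vₙ is written as a fraction p/q in lowest terms, the numerator satisfies |p| ≥ 2. -/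
/-!
Negating all entries negates every `v k`, so it suffices to treat entries `≥ 1`. Then
`v k ≥ 1` by induction, and from the second step on `v k = a k + (v (k - 1))⁻¹` exceeds `1`
strictly, because the inverse term is positive. A rational `p / q > 1` in lowest terms has
`p > q ≥ 1`, so `p ≥ 2`.
-/

theorem Rat.two_le_num_of_one_lt {q : ℚ} (h : 1 < q) : 2 ≤ q.num := by
  have hden : (q.den : ℤ) < q.num := by simpa [Rat.lt_iff] using h
  have : (1 : ℤ) ≤ q.den := by exact_mod_cast q.pos
  omega

section ContinuedFraction

variable {n : ℕ} {a : ℕ → ℤ} {v : ℕ → ℚ}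

theorem contFrac_neg (hv0 : v 0 = a 0)
    (hvk : ∀ k, k + 1 < n → v (k + 1) = a (k + 1) + (v k)⁻¹) :
    (-v) 0 = (-a) 0 ∧ ∀ k, k + 1 < n → (-v) (k + 1) = (-a) (k + 1) + ((-v) k)⁻¹ := by
  refine ⟨by simp [hv0], fun k hk => ?_⟩
  simp only [Pi.neg_apply, Int.cast_neg, inv_neg, hvk k hk]
  ring

variable (ha : ∀ i < n, 1 ≤ a i) (hv0 : v 0 = a 0)
  (hvk : ∀ k, k + 1 < n → v (k + 1) = a (k + 1) + (v k)⁻¹)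
include ha hv0 hvk

theorem contFrac_one_le : ∀ k < n, 1 ≤ v k := by
  intro k
  induction k with
  | zero => intro h0; rw [hv0]; exact_mod_cast ha 0 h0
  | succ k ih =>
    intro hk
    have ha' : (1 : ℚ) ≤ a (k + 1) := by exact_mod_cast ha (k + 1) hk
    rw [hvk k hk]
    linarith [inv_pos.mpr (zero_lt_one.trans_le (ih (by omega)))]

theorem contFrac_one_lt_succ (k : ℕ) (hk : k + 1 < n) : 1 < v (k + 1) := by
  have hv : 0 < v k := zero_lt_one.trans_le (contFrac_one_le ha hv0 hvk k (by omega))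
  have ha' : (1 : ℚ) ≤ a (k + 1) := by exact_mod_cast ha (k + 1) hk
  rw [hvk k hk]
  linarith [inv_pos.mpr hv]

end ContinuedFraction

/-- Let `n ≥ 2` and let `a₀, …, a_{n−1}` be integers which are either all `≥ 1` or all
`≤ −1`. Define rationals `v₀ = a₀` and `v_k = a_k + 1/v_{k−1}` for `1 ≤ k ≤ n−1`.
Then every `v_k` (for `k < n`) is well defined and nonzero — indeed `|v_k| ≥ 1` — and
when `v_{n−1}` is written as a fraction `p/q` in lowest terms, the numerator satisfies
`|p| ≥ 2`. (This is the arithmetic content of Theorem 3.7: a continued fraction with at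
least two entries, all of the same sign, never has numerator `±1`.) -/
theorem continued_fraction_numerator_ge_two (n : ℕ) (hn : 2 ≤ n) (a : ℕ → ℤ)
    (ha : (∀ i < n, 1 ≤ a i) ∨ (∀ i < n, a i ≤ -1))
    (v : ℕ → ℚ) (hv0 : v 0 = a 0)
    (hvk : ∀ k, k + 1 < n → v (k + 1) = a (k + 1) + (v k)⁻¹) :
    (∀ k < n, 1 ≤ |v k|) ∧ 2 ≤ |(v (n - 1)).num| := by
  wlog hpos : ∀ i < n, 1 ≤ a i generalizing a v with hneg
  · have hneg_pos : ∀ i < n, 1 ≤ (-a) i := fun i hi => by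
      simpa using neg_le_neg (ha.resolve_left hpos i hi)
    obtain ⟨hv0', hvk'⟩ := contFrac_neg hv0 hvk
    simpa [abs_neg, Rat.num_neg_eq_neg_num] using
      hneg (-a) (Or.inl hneg_pos) (-v) hv0' hvk' hneg_pos
  obtain ⟨m, rfl⟩ : ∃ m, n = m + 2 := ⟨n - 2, by omega⟩
  refine ⟨fun k hk => (contFrac_one_le hpos hv0 hvk k hk).trans (le_abs_self _), ?_⟩
  exact (Rat.two_le_num_of_one_lt (contFrac_one_lt_succ hpos hv0 hvk m (by omega))).trans
    (le_abs_self _)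
end
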